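/- Let G be a finite group fitting into a short exact sequence 1 → S_4 → G → D_{2n} → 1 where D_{2n} is the dihedral group of order 2n (n ≥ 2). Then G contains a normal abelian subgroup of index at most 12. -/

import Mathlib

/-!
Let `V` be the image in `G` of the Klein four-subgroup of `S₄ ≅ F`; it is characteristic in `F`,
hence normal in `G`. Conjugation embeds `G ⧸ C_G(V)` into `Aut V ≅ S₃`, so `C_G(V)` has index at
most 6, while the preimage `P` of the rotation subgroup of `D₂ₙ` has index 2. In `N = C_G(V) ∩ P`
the kernel of the projection to the cyclic rotation group lies in `C_F(V) = V` (since
`C_{S₄}(V₄) = V₄`), so it is central in `N`; being cyclic modulo a central subgroup, `N` is abelian.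
-/

open Subgroup Function

namespace Subgroup

variable {A B G : Type*} [Group A] [Group B] [Group G]

theorem Characteristic.map_mulEquiv (K : Subgroup A) [hK : K.Characteristic] (e : A ≃* B) :
    (K.map e.toMonoidHom).Characteristic := by
  refine characteristic_iff_map_le.mpr fun ψ => ?_
  have h := characteristic_iff_map_le.mp hK ((e.trans ψ).trans e.symm)
  calc (K.map e.toMonoidHom).map ψ.toMonoidHom
      = (K.map ((e.trans ψ).trans e.symm).toMonoidHom).map e.toMonoidHom := by
        simp only [map_map]; congr 1; ext; simp
    _ ≤ K.map e.toMonoidHom := map_mono h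

theorem normal_map_of_characteristic (K : Subgroup A) [K.Characteristic] {φ : A →* G}
    (hφ : Injective φ) [φ.range.Normal] : (K.map φ).Normal := by
  have := Characteristic.map_mulEquiv K (MonoidHom.ofInjective hφ)
  have h : K.map φ = (K.map (MonoidHom.ofInjective hφ).toMonoidHom).map φ.range.subtype := by
    rw [map_map]; rfl
  rw [h]
  infer_instance

theorem centralizer_map_inf_range_le {K : Subgroup A} (hK : centralizer (K : Set A) ≤ K)
    {φ : A →* G} (hφ : Injective φ) :
    centralizer (K.map φ : Set G) ⊓ φ.range ≤ K.map φ := by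
  rintro _ ⟨hc, x, rfl⟩
  refine mem_map_of_mem φ (hK fun k hk => hφ ?_)
  simpa using hc (φ k) (mem_map_of_mem φ hk)

theorem ker_conjNormal (V : Subgroup G) [V.Normal] :
    (MulAut.conjNormal : G →* MulAut V).ker = centralizer (V : Set G) := by
  ext g
  simp only [MonoidHom.mem_ker, mem_centralizer_iff, MulEquiv.ext_iff, Subtype.ext_iff,
    MulAut.conjNormal_apply, MulAut.one_apply, Subtype.forall, mul_inv_eq_iff_eq_mul]
  exact forall₂_congr fun _ _ => eq_comm

theorem index_centralizer_le_card_mulAut (V : Subgroup G) [V.Normal] [Finite V] :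
    (centralizer (V : Set G)).index ≤ Nat.card (MulAut V) := by
  rw [← ker_conjNormal, index_ker]
  exact Nat.card_le_card_of_injective _ Subtype.val_injective

theorem isMulCommutative_centralizer_inf {Q : Type*} [Group Q] {V P : Subgroup G} (f : G →* Q)
    [IsCyclic (P.map f)] (hV : centralizer (V : Set G) ⊓ f.ker ≤ V) :
    IsMulCommutative ↥(centralizer (V : Set G) ⊓ P) := by
  let f' := (f.comp (centralizer (V : Set G) ⊓ P).subtype).codRestrict (P.map f)
    fun x => mem_map_of_mem f (mem_inf.mp x.2).2
  refine f'.isMulCommutative_of_isCyclic_of_ker_le_center fun a ha => ?_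
  have haV : (a : G) ∈ V := hV ⟨(mem_inf.mp a.2).1, congrArg Subtype.val ha⟩
  exact mem_center_iff.mpr fun b => Subtype.ext ((mem_inf.mp b.2).1 a haV).symm

end Subgroup

theorem MulAut.card_le_factorial (M : Type*) [Group M] [Finite M] :
    Nat.card (MulAut M) ≤ (Nat.card M - 1).factorial := by
  classical
  have := Fintype.ofFinite M
  let res (a : MulAut M) : Equiv.Perm {x : M // x ≠ 1} :=
    Equiv.Perm.subtypePerm a.toEquiv fun x => map_ne_one_iff a a.injective
  have hres : Injective res := fun a b hab => MulEquiv.ext fun x => by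
    by_cases hx : x = 1
    · simp [hx]
    · simpa [res] using congrArg (fun p => (p ⟨x, hx⟩ : M)) hab
  calc Nat.card (MulAut M) ≤ Nat.card (Equiv.Perm {x : M // x ≠ 1}) :=
        Nat.card_le_card_of_injective res hres
    _ = (Nat.card M - 1).factorial := by
        rw [Nat.card_perm, Nat.card_eq_fintype_card, Fintype.card_subtype_compl,
          Fintype.card_subtype_eq, Nat.card_eq_fintype_card]

namespace DihedralGroup

def rotations (n : ℕ) : Subgroup (DihedralGroup n) := zpowers (r 1)

theorem index_rotations (n : ℕ) [NeZero n] : (rotations n).index = 2 := by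
  have h := (rotations n).card_mul_index
  rw [rotations, Nat.card_zpowers, orderOf_r_one, nat_card] at h
  exact Nat.eq_of_mul_eq_mul_left (Nat.pos_of_neZero n) (h.trans (mul_comm 2 n))

end DihedralGroup

namespace Equiv.Perm

instance : DecidablePred (IsSquare : Perm (Fin 4) → Prop) := fun x =>
  decidable_of_iff (∃ r, x = r * r) Iff.rfl

set_option maxRecDepth 4000 in
/-- The identity and the three double transpositions, described intrinsically as the squares of
order dividing 2 (the squares of 4-cycles), so that it is visibly characteristic. -/
def kleinFour : Subgroup (Perm (Fin 4)) where
  carrier := {x | x ^ 2 = 1 ∧ IsSquare x}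
  one_mem' := ⟨one_pow 2, .one⟩
  mul_mem' {a b} := by
    revert a b
    decide
  inv_mem' {x} hx := by
    rwa [Set.mem_ofPred_eq, inv_pow, inv_eq_one, isSquare_inv]

instance : DecidablePred (· ∈ kleinFour) := fun x =>
  inferInstanceAs (Decidable (x ^ 2 = 1 ∧ IsSquare x))

instance : kleinFour.Characteristic := characteristic_iff_map_le.mpr fun φ =>
  map_le_iff_le_comap.mpr fun x hx => ⟨by simp [← map_pow, hx.1], hx.2.map φ⟩

theorem card_kleinFour : Nat.card kleinFour = 4 := by
  rw [Nat.card_eq_fintype_card]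
  decide

theorem centralizer_kleinFour_le : centralizer (kleinFour : Set (Perm (Fin 4))) ≤ kleinFour := by
  intro x
  simp only [mem_centralizer_iff, SetLike.mem_coe]
  revert x
  decide

end Equiv.Perm

open Equiv.Perm DihedralGroup

theorem stmt_13_general {G : Type*} [Group G] [Finite G] (F : Subgroup G) (hFn : F.Normal)
    (hF : Nonempty (F ≃* Equiv.Perm (Fin 4)))
    (n : ℕ) (hB : Nonempty ((G ⧸ F) ≃* DihedralGroup n)) :
    ∃ N : Subgroup G, N.Normal ∧ IsMulCommutative N ∧ N.index ≤ 12 := by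
  obtain ⟨e⟩ := hF
  obtain ⟨d⟩ := hB
  have : NeZero n := ⟨by
    rintro rfl
    have := Finite.of_equiv _ d.toEquiv
    exact not_finite (DihedralGroup 0)⟩
  let φ : Equiv.Perm (Fin 4) →* G := F.subtype.comp e.symm.toMonoidHom
  have hφ : Injective φ := F.subtype_injective.comp e.symm.injective
  have hφF : φ.range = F := by
    rw [MonoidHom.range_comp, MonoidHom.range_eq_top.mpr e.symm.surjective,
      ← MonoidHom.range_eq_map, range_subtype]
  let ψ : G →* DihedralGroup n := d.toMonoidHom.comp (QuotientGroup.mk' F)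
  have hψ : Surjective ψ := d.surjective.comp (QuotientGroup.mk'_surjective F)
  have hψF : ψ.ker = F := by
    rw [MonoidHom.ker_comp_of_injective _ _ d.injective, QuotientGroup.ker_mk']
  have : φ.range.Normal := hφF ▸ hFn
  let V := kleinFour.map φ
  have : V.Normal := normal_map_of_characteristic kleinFour hφ
  let P := (rotations n).comap ψ
  have hP : P.index = 2 := (index_comap_of_surjective _ hψ).trans (index_rotations n)
  have : P.Normal := normal_of_index_eq_two hP
  have : IsCyclic (P.map ψ) := by
    rw [map_comap_eq_self_of_surjective hψ]
    exact isCyclic_zpowers _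
  refine ⟨centralizer (V : Set G) ⊓ P, inferInstance, isMulCommutative_centralizer_inf ψ ?_, ?_⟩
  · rw [hψF, ← hφF]
    exact centralizer_map_inf_range_le centralizer_kleinFour_le hφ
  · have hV : Nat.card V = 4 := (card_map_of_injective hφ).trans card_kleinFour
    calc (centralizer (V : Set G) ⊓ P).index ≤ (centralizer (V : Set G)).index * P.index :=
          index_inf_le
      _ ≤ (Nat.card V - 1).factorial * 2 := by
          rw [hP]
          gcongr
          exact (index_centralizer_le_card_mulAut V).trans (MulAut.card_le_factorial V)
      _ = 12 := by rw [hV]; rfl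

/-- If a finite group `G` fits into `1 → S₄ → G → D₂ₙ → 1` with `D₂ₙ` dihedral of order `2n`,
`n ≥ 2`, then `G` contains a normal abelian subgroup of index at most 12. -/
theorem stmt_13 {G : Type*} [Group G] [Finite G] (F : Subgroup G) (hFn : F.Normal)
    (hF : Nonempty (F ≃* Equiv.Perm (Fin 4)))
    (n : ℕ) (hn : 2 ≤ n) (hB : Nonempty ((G ⧸ F) ≃* DihedralGroup n)) :
    ∃ N : Subgroup G, N.Normal ∧ IsMulCommutative N ∧ N.index ≤ 12 :=
  stmt_13_general F hFn hF n hB
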